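/- arXiv:2101.02086 — 3 statements merged into one kernel-verified Lean document; each statement's English description precedes it below -/
import Mathlib

section
/- In a PATDN, if the tail of the last edge of a path P from s to d with at least two edges is u, and Q is a path from s to u starting no earlier than t₀, with arrival time at most the appearing time of the last edge e of P, and of minimum cost among such paths, and among minimum-cost such paths Q has minimum arrival time, then Q is Pareto t₀-optimal among all paths in P_{s,u}(t₀). -/
structure TemporalEdge (V : Type) where
  tail : V
  head : V
  time : ℝ
  delay : ℝ

instance {V : Type} [Inhabited V] : Inhabited (TemporalEdge V) :=
  ⟨⟨default, default, 0, 0⟩⟩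

/-- Two consecutive temporal edges are compatible in a path. -/
def edgeStep {V : Type} (e f : TemporalEdge V) : Prop :=
  e.head = f.tail ∧ e.time + e.delay ≤ f.time

/-- A path in a PATDN: a nonempty list of temporal edges, consecutive ones compatible. -/
def IsPath {V : Type} (p : List (TemporalEdge V)) : Prop :=
  p ≠ [] ∧ p.Chain' edgeStep

def startTime {V : Type} [Inhabited V] (p : List (TemporalEdge V)) : ℝ :=
  p.headI.time

def arrivalTime {V : Type} [Inhabited V] (p : List (TemporalEdge V)) : ℝ :=
  (p.getLast!).time + (p.getLast!).delay

/-- Cost of a path: left fold of the combination `op` over the edge costs. -/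
def pathCost {V C : Type} [Inhabited C] (γ : TemporalEdge V → C) (op : C → C → C)
    (p : List (TemporalEdge V)) : C :=
  match p.map γ with
  | [] => default
  | x :: xs => xs.foldl op x

/-- `(t₁,c₁)` dominates `(t₂,c₂)`. -/
def Dominates {C : Type} (le : C → C → Prop) (x y : ℝ × C) : Prop :=
  (x.1 < y.1 ∧ le x.2 y.2) ∨ (x.1 ≤ y.1 ∧ le x.2 y.2 ∧ x.2 ≠ y.2)

/-- `le` is a total order: reflexive, transitive, antisymmetric, total. -/
def IsTotalOrderRel {C : Type} (le : C → C → Prop) : Prop :=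
  (∀ a, le a a) ∧ (∀ a b c, le a b → le b c → le a c) ∧
  (∀ a b, le a b → le b a → a = b) ∧ (∀ a b, le a b ∨ le b a)

/-- The isotonicity property. -/
def IsotoneRel {C : Type} (le : C → C → Prop) (op : C → C → C) : Prop :=
  ∀ c1 c2 c, le c1 c2 → le (op c1 c) (op c2 c)

/-- Paths with edges in `E` from `s` to `d` starting no earlier than `t0`. -/
def InPaths {V : Type} [Inhabited V] (E : Set (TemporalEdge V)) (s d : V) (t0 : ℝ)
    (p : List (TemporalEdge V)) : Prop :=
  IsPath p ∧ (∀ e ∈ p, e ∈ E) ∧ p.headI.tail = s ∧ (p.getLast!).head = d ∧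
    t0 ≤ startTime p

/-- Pareto `t0`-optimality of a path. -/
def ParetoOpt {V C : Type} [Inhabited V] [Inhabited C] (le : C → C → Prop)
    (γ : TemporalEdge V → C) (op : C → C → C) (E : Set (TemporalEdge V))
    (s d : V) (t0 : ℝ) (p : List (TemporalEdge V)) : Prop :=
  InPaths E s d t0 p ∧ ∀ q, InPaths E s d t0 q →
    ¬ Dominates le (arrivalTime q, pathCost γ op q) (arrivalTime p, pathCost γ op p)

theorem stmt9 {V C : Type} [Inhabited V] [Inhabited C]
    (le : C → C → Prop) (op : C → C → C) (γ : TemporalEdge V → C)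
    (E : Set (TemporalEdge V))
    (htot : IsTotalOrderRel le) (hiso : IsotoneRel le op)
    (s d : V) (t0 : ℝ)
    (p' : List (TemporalEdge V)) (e : TemporalEdge V)
    (hP : InPaths E s d t0 (p' ++ [e])) (hp' : p' ≠ [])
    (Q : List (TemporalEdge V))
    (hQ : InPaths E s e.tail t0 Q) (hQa : arrivalTime Q ≤ e.time)
    (hmincost : ∀ R, InPaths E s e.tail t0 R → arrivalTime R ≤ e.time →
      le (pathCost γ op Q) (pathCost γ op R))
    (hminarr : ∀ R, InPaths E s e.tail t0 R → arrivalTime R ≤ e.time →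
      pathCost γ op R = pathCost γ op Q → arrivalTime Q ≤ arrivalTime R) :
    ParetoOpt le γ op E s e.tail t0 Q := by
  obtain ⟨-, -, hanti, -⟩ := htot
  refine ⟨hQ, fun R hR hdom => ?_⟩
  rcases hdom with ⟨hlt, hle⟩ | ⟨hle', hle, hne⟩
  · have hRa : arrivalTime R ≤ e.time := le_of_lt (lt_of_lt_of_le hlt hQa)
    have h1 := hmincost R hR hRa
    have heq := hanti _ _ h1 hle
    have := hminarr R hR hRa heq.symm
    exact absurd hlt (not_lt.mpr this)
  · have hRa : arrivalTime R ≤ e.time := le_trans hle' hQa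
    have h1 := hmincost R hR hRa
    exact hne (hanti _ _ hle h1)
end

section
/- If two consecutive pairs (a₁, s₁) and (a₂, s₂) (ordered by increasing arrival time) belong to the Pareto set PO_{s,t₀}(u) for the profile cost structure (cost of a path equals its starting time, a ⊕ b = a, a ⪯ b iff a ≥ b), then a₁ < a₂ and s₁ < s₂, and for every starting time t ∈ (s₁, s₂], the earliest arrival time at u over paths from s starting at time ≥ t equals a₂. -/
section Aux

lemma foldl_keep_first {α β : Type*} (xs : List β) (x : α) :
    xs.foldl (fun a _ => a) x = x := by
  induction xs with
  | nil => rfl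
  | cons y ys ih => simp [List.foldl, ih]

lemma cost_eq_start {V : Type} [Inhabited V] (p : List (TemporalEdge V)) (hp : p ≠ []) :
    pathCost (fun e => e.time) (fun a _ : ℝ => a) p = startTime p := by
  cases p with
  | nil => exact absurd rfl hp
  | cons e es => simp [pathCost, startTime, foldl_keep_first]

lemma exists_pareto {V : Type} [Inhabited V] (E : Set (TemporalEdge V)) (s u : V) (t0 : ℝ)
    (hfin : {p : List (TemporalEdge V) | InPaths E s u t0 p}.Finite)
    (q : List (TemporalEdge V)) (hq : InPaths E s u t0 q) :
    ∃ p, ParetoOpt (fun a b : ℝ => b ≤ a) (fun e => e.time) (fun a _ => a) E s u t0 p ∧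
      arrivalTime p ≤ arrivalTime q ∧
      pathCost (fun e => e.time) (fun a _ => a) q ≤
        pathCost (fun e => e.time) (fun a _ => a) p := by
  classical
  set cost : List (TemporalEdge V) → ℝ :=
    pathCost (fun e => e.time) (fun a _ : ℝ => a) with hcost
  let g : List (TemporalEdge V) → ℝ × ℝᵒᵈ :=
    fun p => (arrivalTime p, OrderDual.toDual (cost p))
  set S : Set (List (TemporalEdge V)) :=
    {p | InPaths E s u t0 p ∧ g p ≤ g q} with hS
  have hSfin : S.Finite := hfin.subset (fun p hp => hp.1)
  have hSne : S.Nonempty := ⟨q, hq, le_refl _⟩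
  obtain ⟨p, hpS, hmin⟩ := Set.Finite.exists_minimalFor g S hSfin hSne
  refine ⟨p, ⟨hpS.1, ?_⟩, hpS.2.1, hpS.2.2⟩
  intro r hr hdom
  have hr' : g r ≤ g p ∧ g r ≠ g p := by
    rcases hdom with ⟨h1, h2⟩ | ⟨h1, h2, h3⟩
    · exact ⟨⟨le_of_lt h1, h2⟩, fun he => absurd (congrArg Prod.fst he) (ne_of_lt h1)⟩
    · exact ⟨⟨h1, h2⟩, fun he => h3 (OrderDual.toDual.injective (congrArg Prod.snd he))⟩
  have hrS : r ∈ S := ⟨hr, le_trans hr'.1 hpS.2⟩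
  exact hr'.2 (le_antisymm hr'.1 (hmin hrS hr'.1))

end Aux

theorem stmt11 {V : Type} [Inhabited V] (E : Set (TemporalEdge V)) (s u : V) (t0 : ℝ)
    (hfin : {p : List (TemporalEdge V) | InPaths E s u t0 p}.Finite)
    (a1 s1 a2 s2 : ℝ)
    (h1 : ∃ p, ParetoOpt (fun a b : ℝ => b ≤ a) (fun e => e.time) (fun a _ => a)
            E s u t0 p ∧ arrivalTime p = a1 ∧
            pathCost (fun e => e.time) (fun a _ => a) p = s1)
    (h2 : ∃ p, ParetoOpt (fun a b : ℝ => b ≤ a) (fun e => e.time) (fun a _ => a)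
            E s u t0 p ∧ arrivalTime p = a2 ∧
            pathCost (fun e => e.time) (fun a _ => a) p = s2)
    (hlt : a1 < a2)
    (hconsec : ¬ ∃ p, ParetoOpt (fun a b : ℝ => b ≤ a) (fun e => e.time) (fun a _ => a)
            E s u t0 p ∧ a1 < arrivalTime p ∧ arrivalTime p < a2) :
    s1 < s2 ∧ ∀ t : ℝ, s1 < t → t ≤ s2 →
      IsLeast {a : ℝ | ∃ p, InPaths E s u t0 p ∧ t ≤ startTime p ∧ arrivalTime p = a}
        a2 := by

  classical
  obtain ⟨p1, hp1, ha1, hs1⟩ := h1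
  obtain ⟨p2, hp2, ha2, hs2⟩ := h2
  have hne1 : p1 ≠ [] := hp1.1.1.1
  have hne2 : p2 ≠ [] := hp2.1.1.1
  have hst1 : startTime p1 = s1 := by rw [← cost_eq_start p1 hne1]; exact hs1
  have hst2 : startTime p2 = s2 := by rw [← cost_eq_start p2 hne2]; exact hs2
  have hs12 : s1 < s2 := by
    by_contra h
    push_neg at h
    exact hp2.2 p1 hp1.1 (Or.inl ⟨by rw [ha1, ha2]; exact hlt, by rw [hs1, hs2]; exact h⟩)
  refine ⟨hs12, fun t ht1 ht2 => ?_⟩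
  constructor
  · exact ⟨p2, hp2.1, by rw [hst2]; exact ht2, ha2⟩
  · rintro a ⟨q, hq, hqt, rfl⟩
    by_contra h
    push_neg at h
    obtain ⟨p, hp, hpa, hpc⟩ := exists_pareto E s u t0 hfin q hq
    have hcq : s1 < pathCost (fun e => e.time) (fun a _ => a) q := by
      rw [cost_eq_start q hq.1.1]; exact lt_of_lt_of_le ht1 hqt
    have hcp : s1 < pathCost (fun e => e.time) (fun a _ => a) p :=
      lt_of_lt_of_le hcq hpc
    have hpa2 : arrivalTime p < a2 := lt_of_le_of_lt hpa h
    rcases lt_or_ge a1 (arrivalTime p) with h' | h'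
    · exact hconsec ⟨p, hp, h', hpa2⟩
    · refine hp1.2 p hp.1 (Or.inr ⟨by rw [ha1]; exact h', ?_, ?_⟩)
      · rw [hs1]; exact le_of_lt hcp
      · rw [hs1]; exact ne_of_gt hcp
end

section
/- In a PATDN, if the temporal edges are sorted so that: arrival times are nondecreasing, among edges with equal arrival time those with positive delay come first, and edges with equal arrival time and zero delay are topologically sorted with respect to the zero snapshot graph, then for every edge e = (u,v,τ,δ) in the sorted list, no edge appearing at or before e in the list departs from v at a time ≥ τ + δ, except possibly edges with zero delay departing from v at exactly time τ + δ, which cannot occur when δ = 0 due to the topological order. -/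
theorem stmt12 {V : Type} [Inhabited V] (L : List (TemporalEdge V))
    (hdelay : ∀ e ∈ L, 0 ≤ e.delay)
    (hsort : ∀ i j : Fin L.length, i ≤ j →
      (L.get i).time + (L.get i).delay ≤ (L.get j).time + (L.get j).delay)
    (hpos : ∀ i j : Fin L.length, i ≤ j →
      (L.get i).time + (L.get i).delay = (L.get j).time + (L.get j).delay →
      (L.get i).delay = 0 → (L.get j).delay = 0)
    (htopo : ∀ i j : Fin L.length, i ≤ j → (L.get i).delay = 0 → (L.get j).delay = 0 →
      (L.get i).time = (L.get j).time → (L.get i).tail ≠ (L.get j).head) :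
    ∀ i j : Fin L.length, i ≤ j → (L.get i).tail = (L.get j).head →
      (L.get i).time < (L.get j).time + (L.get j).delay ∨
      ((L.get i).time = (L.get j).time + (L.get j).delay ∧
        (L.get i).delay = 0 ∧ 0 < (L.get j).delay) := by
  intro i j hij htail
  have hdi : 0 ≤ (L.get i).delay := hdelay _ (L.get_mem i)
  have hs := hsort i j hij
  have hle : (L.get i).time ≤ (L.get j).time + (L.get j).delay := by linarith
  rcases lt_or_eq_of_le hle with h | h
  · exact Or.inl h
  · exfalso
    have hdi0 : (L.get i).delay = 0 := by linarith
    have hdj0 : (L.get j).delay = 0 := hpos i j hij (by linarith) hdi0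
    have hteq : (L.get i).time = (L.get j).time := by linarith
    exact htopo i j hij hdi0 hdj0 hteq htail
end
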